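/- Let A be a C*-algebra and E a pre-Hilbert *-bimodule over A. Then for all x, y ∈ E and b ∈ A, the following inequality holds in A: ⟨x,y⟩*·⟨x,y⟩ + b*·⟨x*, x⟩·b ≤ ‖x‖_m² · (⟨y*, y⟩ + b*·b), where the right-hand side is the nonnegative real scalar ‖x‖_m² times the positive element ⟨y*, y⟩ + b*·b. -/

import Mathlib

/-- A pre-Hilbert `*`-bimodule over a C*-algebra `A`: a complex vector space `E` with
commuting left and right `A`-module structures compatible with the complex scalar action,
an `A`-bilinear map `inn : E × E → A`, and a conjugate-linear involution `invol`, satisfying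
(a) `⟨x,y⟩* = ⟨y*, x*⟩`, (b) `(a•x)* = x*•a*`, and (c) `⟨x, x*⟩ ≥ 0`. -/
structure PreHilbertStarBimodule (A : Type*) [CStarAlgebra A] [PartialOrder A]
    [StarOrderedRing A] (E : Type*) [AddCommGroup E] [Module ℂ E] where
  /-- the left action of `A` on `E` -/
  lsmul : A → E → E
  /-- the right action of `A` on `E` -/
  rsmul : E → A → E
  /-- the `A`-valued bilinear pairing -/
  inn : E → E → A
  /-- the involution on `E` -/
  invol : E → E
  lsmul_add : ∀ (a : A) (x y : E), lsmul a (x + y) = lsmul a x + lsmul a y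
  add_lsmul : ∀ (a b : A) (x : E), lsmul (a + b) x = lsmul a x + lsmul b x
  mul_lsmul : ∀ (a b : A) (x : E), lsmul (a * b) x = lsmul a (lsmul b x)
  one_lsmul : ∀ x : E, lsmul 1 x = x
  lsmul_csmul : ∀ (c : ℂ) (a : A) (x : E), lsmul a (c • x) = c • lsmul a x
  csmul_lsmul : ∀ (c : ℂ) (a : A) (x : E), lsmul (c • a) x = c • lsmul a x
  rsmul_add : ∀ (x y : E) (a : A), rsmul (x + y) a = rsmul x a + rsmul y a
  add_rsmul : ∀ (x : E) (a b : A), rsmul x (a + b) = rsmul x a + rsmul x b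
  rsmul_mul : ∀ (x : E) (a b : A), rsmul x (a * b) = rsmul (rsmul x a) b
  rsmul_one : ∀ x : E, rsmul x 1 = x
  rsmul_csmul : ∀ (c : ℂ) (x : E) (a : A), rsmul (c • x) a = c • rsmul x a
  csmul_rsmul : ∀ (c : ℂ) (x : E) (a : A), rsmul x (c • a) = c • rsmul x a
  lsmul_rsmul_comm : ∀ (a : A) (x : E) (b : A), lsmul a (rsmul x b) = rsmul (lsmul a x) b
  inn_add_left : ∀ x y z : E, inn (x + y) z = inn x z + inn y z
  inn_add_right : ∀ x y z : E, inn x (y + z) = inn x y + inn x z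
  inn_csmul_left : ∀ (c : ℂ) (x y : E), inn (c • x) y = c • inn x y
  inn_csmul_right : ∀ (c : ℂ) (x y : E), inn x (c • y) = c • inn x y
  inn_lsmul_left : ∀ (a : A) (x y : E), inn (lsmul a x) y = a * inn x y
  inn_rsmul_left : ∀ (a : A) (x y : E), inn (rsmul x a) y = inn x (lsmul a y)
  inn_rsmul_right : ∀ (a : A) (x y : E), inn x (rsmul y a) = inn x y * a
  invol_add : ∀ x y : E, invol (x + y) = invol x + invol y
  invol_csmul : ∀ (c : ℂ) (x : E), invol (c • x) = (starRingEnd ℂ c) • invol x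
  invol_invol : ∀ x : E, invol (invol x) = x
  star_inn : ∀ x y : E, star (inn x y) = inn (invol y) (invol x)
  invol_lsmul : ∀ (a : A) (x : E), invol (lsmul a x) = rsmul (invol x) (star a)
  inn_invol_nonneg : ∀ x : E, 0 ≤ inn x (invol x)

namespace PreHilbertStarBimodule

variable {A : Type*} [CStarAlgebra A] [PartialOrder A] [StarOrderedRing A]
variable {E : Type*} [AddCommGroup E] [Module ℂ E]

/-- the left seminorm `‖x‖_l = ‖⟨x, x*⟩‖^{1/2}` -/
noncomputable def normL (M : PreHilbertStarBimodule A E) (x : E) : ℝ :=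
  Real.sqrt ‖M.inn x (M.invol x)‖

/-- the right seminorm `‖x‖_r = ‖⟨x*, x⟩‖^{1/2}` -/
noncomputable def normR (M : PreHilbertStarBimodule A E) (x : E) : ℝ :=
  Real.sqrt ‖M.inn (M.invol x) x‖

/-- the max seminorm `‖x‖_m = max (‖x‖_l, ‖x‖_r)` -/
noncomputable def normM (M : PreHilbertStarBimodule A E) (x : E) : ℝ :=
  max (M.normL x) (M.normR x)

end PreHilbertStarBimodule

/-! Positivity of `⟨z*, z⟩` for `z = y + x* • u` says that the block matrix
`[[⟨y*,y⟩, ⟨x,y⟩*], [⟨x,y⟩, ⟨x,x*⟩]]` is positive. Since `⟨x,x*⟩ ≤ k := ‖x‖_m²`, the choice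
`u = -⟨x,y⟩ / k` yields the Cauchy–Schwarz inequality `⟨x,y⟩*⟨x,y⟩ ≤ k ⟨y*,y⟩`; the degenerate
case `k = 0` follows by letting `k` decrease to `0`, the positive cone being closed. The second
summand is `⟨x*,x⟩ ≤ k` conjugated by `b`. -/

namespace CStarAlgebra

variable {A : Type*} [CStarAlgebra A] [PartialOrder A] [StarOrderedRing A]

lemma le_smul_one_of_norm_le {a : A} {k : ℝ} (ha : 0 ≤ a) (h : ‖a‖ ≤ k) : a ≤ k • (1 : A) := by
  rw [← Algebra.algebraMap_eq_smul_one]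
  exact (norm_le_iff_le_algebraMap a ((norm_nonneg a).trans h) ha).mp h

lemma star_mul_mul_le_smul_star_mul_self {a : A} {k : ℝ} (h : a ≤ k • (1 : A)) (b : A) :
    star b * a * b ≤ k • (star b * b) := by
  simpa only [mul_smul_comm, smul_mul_assoc, mul_one] using star_left_conjugate_le_conjugate h b

lemma star_mul_self_le_smul_of_forall_nonneg {G c F : A} {k : ℝ} (hk : 0 ≤ k)
    (hF : F ≤ k • (1 : A)) (hpos : ∀ u : A, 0 ≤ G + star c * u + star u * c + star u * F * u) :
    star c * c ≤ k • G := by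
  have of_lt : ∀ k' : ℝ, k < k' → star c * c ≤ k' • G := by
    intro k' hkk'
    have hk' : 0 < k' := hk.trans_lt hkk'
    have hcFc : star c * F * c ≤ k' • (star c * c) :=
      star_mul_mul_le_smul_star_mul_self
        (hF.trans (smul_le_smul_of_nonneg_right hkk'.le zero_le_one)) c
    have hform := hpos ((-k'⁻¹) • c)
    simp only [star_smul, star_trivial, mul_smul_comm, smul_mul_assoc, smul_smul] at hform
    have hdecomp : k' • G - star c * c =
        k' • (G + (-k'⁻¹) • (star c * c) + (-k'⁻¹) • (star c * c)
          + (-k'⁻¹ * -k'⁻¹) • (star c * F * c))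
        + k'⁻¹ • (k' • (star c * c) - star c * F * c) := by
      match_scalars <;> field_simp <;> ring
    rw [← sub_nonneg, hdecomp]
    exact add_nonneg (smul_nonneg hk'.le hform)
      (smul_nonneg (inv_nonneg.mpr hk'.le) (sub_nonneg.mpr hcFc))
  have hlim : Filter.Tendsto (fun k' : ℝ => k' • G) (nhdsWithin k (Set.Ioi k)) (nhds (k • G)) :=
    ((continuous_id.smul continuous_const).tendsto k).mono_left nhdsWithin_le_nhds
  exact ge_of_tendsto hlim (eventually_nhdsWithin_of_forall fun k' hk' => of_lt k' hk')

end CStarAlgebra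

namespace PreHilbertStarBimodule

variable {A : Type*} [CStarAlgebra A] [PartialOrder A] [StarOrderedRing A]
variable {E : Type*} [AddCommGroup E] [Module ℂ E] (M : PreHilbertStarBimodule A E)

lemma invol_rsmul (x : E) (a : A) : M.invol (M.rsmul x a) = M.lsmul (star a) (M.invol x) := by
  rw [← M.invol_invol (M.lsmul _ _), M.invol_lsmul, star_star, M.invol_invol]

lemma inn_invol_left_nonneg (x : E) : 0 ≤ M.inn (M.invol x) x := by
  simpa only [M.invol_invol] using M.inn_invol_nonneg (M.invol x)

-- `⟨z*, z⟩ ≥ 0` expanded for `z = y + x* • u`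
lemma inn_quadratic_nonneg (x y : E) (u : A) :
    0 ≤ M.inn (M.invol y) y + star (M.inn x y) * u + star u * M.inn x y
      + star u * M.inn x (M.invol x) * u := by
  have h := M.inn_invol_left_nonneg (y + M.rsmul (M.invol x) u)
  rw [M.invol_add, M.invol_rsmul, M.invol_invol, M.inn_add_left, M.inn_add_right,
    M.inn_add_right, M.inn_lsmul_left, M.inn_lsmul_left, M.inn_rsmul_right, M.inn_rsmul_right,
    ← M.star_inn] at h
  simpa only [mul_assoc, add_assoc] using h

lemma norm_inn_invol_le_normM_sq (x : E) : ‖M.inn x (M.invol x)‖ ≤ M.normM x ^ 2 := by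
  rw [← Real.sq_sqrt (norm_nonneg _)]
  exact pow_le_pow_left₀ (Real.sqrt_nonneg _) (le_max_left _ _) 2

lemma norm_inn_invol_left_le_normM_sq (x : E) : ‖M.inn (M.invol x) x‖ ≤ M.normM x ^ 2 := by
  rw [← Real.sq_sqrt (norm_nonneg _)]
  exact pow_le_pow_left₀ (Real.sqrt_nonneg _) (le_max_right _ _) 2

end PreHilbertStarBimodule

/-- For all `x, y ∈ E` and `b ∈ A`:
`⟨x,y⟩*⟨x,y⟩ + b*⟨x*,x⟩b ≤ ‖x‖_m² (⟨y*,y⟩ + b*b)` in `A`. -/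
theorem PreHilbertStarBimodule.linking_estimate
    {A : Type*} [CStarAlgebra A] [PartialOrder A] [StarOrderedRing A]
    {E : Type*} [AddCommGroup E] [Module ℂ E]
    (M : PreHilbertStarBimodule A E) (x y : E) (b : A) :
    star (M.inn x y) * M.inn x y + star b * M.inn (M.invol x) x * b ≤
      (M.normM x ^ 2 : ℝ) • (M.inn (M.invol y) y + star b * b) := by
  have hleft : M.inn x (M.invol x) ≤ (M.normM x ^ 2) • (1 : A) :=
    CStarAlgebra.le_smul_one_of_norm_le (M.inn_invol_nonneg x) (M.norm_inn_invol_le_normM_sq x)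
  have hright : M.inn (M.invol x) x ≤ (M.normM x ^ 2) • (1 : A) :=
    CStarAlgebra.le_smul_one_of_norm_le (M.inn_invol_left_nonneg x)
      (M.norm_inn_invol_left_le_normM_sq x)
  rw [smul_add]
  exact add_le_add
    (CStarAlgebra.star_mul_self_le_smul_of_forall_nonneg (sq_nonneg _) hleft
      (M.inn_quadratic_nonneg x y))
    (CStarAlgebra.star_mul_mul_le_smul_star_mul_self hright b)
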